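/- arXiv:2603.26303 — 8 statements merged into one kernel-verified Lean document; each statement's English description precedes it below -/
import Mathlib

section
/- Let V be a finite-dimensional real inner product space, and let P and Q be orthogonal projections on V. Suppose 0 ≤ p < 1 and every non-zero eigenvalue of P + Q is at least 1 - p. Then for every f ∈ V, ⟨Pf, Qf⟩ ≥ -p · ‖Pf‖ · ‖Qf‖. -/
/-!
If `(P + Q) e = μ • e`, then `P e - Q e` lies in the `(2 - μ)`-eigenspace of `P + Q` and has
squared norm `μ (2 - μ) ‖e‖²`. So apart from `0` and `2` the spectrum of `P + Q` is symmetric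
about `1`, and the hypothesis confines it to `[1 - p, 1 + p]`; on the `0`- and `2`-eigenspaces
both projections vanish, resp. act as the identity.

Write `f = u + g` with `u` in the `2`-eigenspace and `g` orthogonal to it. Then `P g` is
orthogonal to the `0`- and `2`-eigenspaces, so `‖Q P g‖ = ‖(P + Q - 1) P g‖ ≤ p ‖P g‖` and
`⟪P g, Q g⟫ = ⟪Q P g, Q g⟫ ≥ -p ‖P g‖ ‖Q g‖`. Finally `P f = u + P g` and `Q f = u + Q g` with
`u` orthogonal to `P g` and `Q g`, and adding such a common orthogonal component to `x` and `y`
does not decrease `⟪x, y⟫ + p ‖x‖ ‖y‖`.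
-/

open Module.End

namespace LinearMap.IsSymmetric

open scoped InnerProductSpace

variable {𝕜 E : Type*} [RCLike 𝕜] [NormedAddCommGroup E] [InnerProductSpace 𝕜 E]
  [FiniteDimensional 𝕜 E] {T : E →ₗ[𝕜] E}

theorem norm_apply_sub_smul_le (hT : T.IsSymmetric) {c : 𝕜} {p : ℝ} (hp : 0 ≤ p) {x : E}
    (hx : ∀ μ : 𝕜, p < ‖μ - c‖ → ∀ v ∈ eigenspace T μ, ⟪v, x⟫_𝕜 = 0) :
    ‖T x - c • x‖ ≤ p * ‖x‖ := by
  set b := hT.eigenvectorBasis rfl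
  set ν := hT.eigenvalues rfl
  have hcoeff (i) : ⟪b i, T x - c • x⟫_𝕜 = (ν i - c) * ⟪b i, x⟫_𝕜 := by
    rw [inner_sub_right, inner_smul_right, ← hT, hT.apply_eigenvectorBasis, inner_smul_left,
      RCLike.conj_ofReal, sub_mul]
  have hterm (i) : ‖⟪b i, T x - c • x⟫_𝕜‖ ^ 2 ≤ p ^ 2 * ‖⟪b i, x⟫_𝕜‖ ^ 2 := by
    rw [hcoeff, norm_mul, mul_pow]
    by_cases hν : ‖(ν i : 𝕜) - c‖ ≤ p
    · gcongr
    · rw [hx _ (not_le.mp hν) _ (hT.hasEigenvector_eigenvectorBasis rfl i).1]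
      simp
  have hsq : ‖T x - c • x‖ ^ 2 ≤ (p * ‖x‖) ^ 2 := by
    rw [← b.sum_sq_norm_inner_right, mul_pow, ← b.sum_sq_norm_inner_right, Finset.mul_sum]
    exact Finset.sum_le_sum fun i _ ↦ hterm i
  exact (pow_le_pow_iff_left₀ (norm_nonneg _) (by positivity) two_ne_zero).mp hsq

end LinearMap.IsSymmetric

open scoped RealInnerProductSpace

theorem sub_mem_eigenspace_two_sub_of_isIdempotentElem {R M : Type*} [CommRing R]
    [AddCommGroup M] [Module R M] {P Q : Module.End R M} (hP : IsIdempotentElem P)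
    (hQ : IsIdempotentElem Q) {μ : R} {e : M} (he : e ∈ eigenspace (P + Q) μ) :
    P e - Q e ∈ eigenspace (P + Q) (2 - μ) := by
  rw [mem_eigenspace_iff, LinearMap.add_apply] at he ⊢
  have hPP : P (P e) = P e := LinearMap.congr_fun hP.eq e
  have hQQ : Q (Q e) = Q e := LinearMap.congr_fun hQ.eq e
  have hPQ : P (Q e) = μ • P e - P e := by rw [← map_smul, ← he, map_add, hPP]; abel
  have hQP : Q (P e) = μ • Q e - Q e := by rw [← map_smul, ← he, map_add, hQQ]; abel
  rw [map_sub, map_sub, hPP, hQQ, hPQ, hQP]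
  module

section

variable {V : Type*} [NormedAddCommGroup V] [InnerProductSpace ℝ V] {P Q : V →ₗ[ℝ] V}

namespace LinearMap.IsSymmetricProjection

theorem inner_apply_self (hP : P.IsSymmetricProjection) (v : V) : ⟪P v, v⟫ = ‖P v‖ ^ 2 := by
  conv_lhs => rw [← hP.isIdempotentElem.eq]
  rw [Module.End.mul_apply, hP.isSymmetric, real_inner_self_eq_norm_sq]

theorem norm_sub_sq_of_mem_eigenspace_add (hP : P.IsSymmetricProjection)
    (hQ : Q.IsSymmetricProjection) {μ : ℝ} {e : V} (he : e ∈ eigenspace (P + Q) μ) :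
    ‖P e - Q e‖ ^ 2 = μ * (2 - μ) * ‖e‖ ^ 2 := by
  have hsum : P e + Q e = μ • e := mem_eigenspace_iff.mp he
  have hsq : ‖P e‖ ^ 2 + ‖Q e‖ ^ 2 = μ * ‖e‖ ^ 2 := by
    rw [← hP.inner_apply_self, ← hQ.inner_apply_self, ← inner_add_left, hsum,
      real_inner_smul_left, real_inner_self_eq_norm_sq]
  have hnorm : ‖P e + Q e‖ ^ 2 = μ ^ 2 * ‖e‖ ^ 2 := by
    rw [hsum, norm_smul, mul_pow, Real.norm_eq_abs, sq_abs]
  have := parallelogram_law_with_norm ℝ (P e) (Q e)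
  nlinarith

theorem apply_eq_apply_of_mem_eigenspace_add (hP : P.IsSymmetricProjection)
    (hQ : Q.IsSymmetricProjection) {μ : ℝ} {e : V}
    (he : e ∈ eigenspace (P + Q) μ) (hμ : μ * (2 - μ) = 0) : P e = Q e := by
  have := hP.norm_sub_sq_of_mem_eigenspace_add hQ he
  rwa [hμ, zero_mul, sq_eq_zero_iff, norm_eq_zero, sub_eq_zero] at this

theorem apply_eq_zero_of_mem_eigenspace_zero (hP : P.IsSymmetricProjection)
    (hQ : Q.IsSymmetricProjection) {e : V} (he : e ∈ eigenspace (P + Q) 0) :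
    P e = 0 := by
  have hPQ := hP.apply_eq_apply_of_mem_eigenspace_add hQ he (zero_mul _)
  have hsum : P e + Q e = 0 := by simpa using mem_eigenspace_iff.mp he
  rw [← hPQ, ← two_smul ℝ] at hsum
  exact (smul_eq_zero.mp hsum).resolve_left two_ne_zero

theorem apply_eq_self_of_mem_eigenspace_two (hP : P.IsSymmetricProjection)
    (hQ : Q.IsSymmetricProjection) {e : V} (he : e ∈ eigenspace (P + Q) 2) :
    P e = e := by
  have hPQ := hP.apply_eq_apply_of_mem_eigenspace_add hQ he (by ring)
  have hsum : P e + Q e = (2 : ℝ) • e := mem_eigenspace_iff.mp he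
  rw [← hPQ, ← two_smul ℝ] at hsum
  exact smul_right_injective V two_ne_zero hsum

theorem hasEigenvalue_two_sub (hP : P.IsSymmetricProjection)
    (hQ : Q.IsSymmetricProjection) {μ : ℝ} (hμ : HasEigenvalue (P + Q) μ) (h0 : μ ≠ 0)
    (h2 : μ ≠ 2) : HasEigenvalue (P + Q) (2 - μ) := by
  obtain ⟨e, he, he0⟩ := hμ.exists_hasEigenvector
  refine hasEigenvalue_of_hasEigenvector (x := P e - Q e)
    ⟨sub_mem_eigenspace_two_sub_of_isIdempotentElem hP.isIdempotentElem hQ.isIdempotentElem he,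
      fun hd ↦ ?_⟩
  have := hP.norm_sub_sq_of_mem_eigenspace_add hQ he
  rw [hd, norm_zero, zero_pow two_ne_zero, eq_comm] at this
  simp [sub_eq_zero, h0, h2.symm, he0] at this

theorem abs_sub_one_le_of_hasEigenvalue (hP : P.IsSymmetricProjection)
    (hQ : Q.IsSymmetricProjection) {p : ℝ}
    (hev : ∀ μ : ℝ, μ ≠ 0 → HasEigenvalue (P + Q) μ → 1 - p ≤ μ) {μ : ℝ}
    (hμ : HasEigenvalue (P + Q) μ) (h0 : μ ≠ 0) (h2 : μ ≠ 2) : |μ - 1| ≤ p := by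
  have hlow := hev μ h0 hμ
  have hhigh := hev (2 - μ) (sub_ne_zero.mpr h2.symm) (hP.hasEigenvalue_two_sub hQ hμ h0 h2)
  rw [abs_le]
  constructor <;> linarith

theorem norm_apply_apply_le [FiniteDimensional ℝ V] (hP : P.IsSymmetricProjection)
    (hQ : Q.IsSymmetricProjection) {p : ℝ} (hp : 0 ≤ p)
    (hev : ∀ μ : ℝ, μ ≠ 0 → HasEigenvalue (P + Q) μ → 1 - p ≤ μ) {g : V}
    (hg : g ∈ (eigenspace (P + Q) 2)ᗮ) : ‖Q (P g)‖ ≤ p * ‖P g‖ := by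
  have hfar : ∀ μ : ℝ, p < ‖μ - 1‖ → ∀ v ∈ eigenspace (P + Q) μ, ⟪v, P g⟫ = 0 := by
    intro μ hμ v hv
    by_cases hv0 : v = 0
    · rw [hv0, inner_zero_left]
    rw [← hP.isSymmetric]
    rcases eq_or_ne μ 0 with rfl | h0
    · rw [hP.apply_eq_zero_of_mem_eigenspace_zero hQ hv, inner_zero_left]
    rcases eq_or_ne μ 2 with rfl | h2
    · rw [hP.apply_eq_self_of_mem_eigenspace_two hQ hv]
      exact Submodule.inner_right_of_mem_orthogonal hv hg
    have := hP.abs_sub_one_le_of_hasEigenvalue hQ hev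
      (hasEigenvalue_of_hasEigenvector ⟨hv, hv0⟩) h0 h2
    rw [Real.norm_eq_abs] at hμ
    linarith
  have hPP : P (P g) = P g := LinearMap.congr_fun hP.isIdempotentElem.eq g
  simpa [hPP] using (hP.isSymmetric.add hQ.isSymmetric).norm_apply_sub_smul_le hp hfar

end LinearMap.IsSymmetricProjection

theorem neg_mul_norm_mul_norm_le_inner_add_add {u x y : V} {p : ℝ} (hp : 0 ≤ p)
    (hux : ⟪u, x⟫ = 0) (huy : ⟪u, y⟫ = 0) (h : -p * ‖x‖ * ‖y‖ ≤ ⟪x, y⟫) :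
    -p * ‖u + x‖ * ‖u + y‖ ≤ ⟪u + x, u + y⟫ := by
  have hx : ‖x‖ ≤ ‖u + x‖ := by
    refine (sq_le_sq₀ (norm_nonneg _) (norm_nonneg _)).mp ?_
    rw [norm_add_sq_real, hux]
    nlinarith
  have hy : ‖y‖ ≤ ‖u + y‖ := by
    refine (sq_le_sq₀ (norm_nonneg _) (norm_nonneg _)).mp ?_
    rw [norm_add_sq_real, huy]
    nlinarith
  have hinner : ⟪u + x, u + y⟫ = ‖u‖ ^ 2 + ⟪x, y⟫ := by
    rw [inner_add_left, inner_add_right, inner_add_right, huy, real_inner_comm u x, hux,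
      real_inner_self_eq_norm_sq]
    ring
  have : p * ‖x‖ * ‖y‖ ≤ p * ‖u + x‖ * ‖u + y‖ := by gcongr
  nlinarith [sq_nonneg ‖u‖]

end

theorem stmt_0_general {V : Type*} [NormedAddCommGroup V] [InnerProductSpace ℝ V]
    [FiniteDimensional ℝ V]
    (P Q : V →ₗ[ℝ] V)
    (hPidem : P ∘ₗ P = P) (hPsym : LinearMap.IsSymmetric P)
    (hQidem : Q ∘ₗ Q = Q) (hQsym : LinearMap.IsSymmetric Q)
    (p : ℝ) (hp0 : 0 ≤ p)
    (hev : ∀ μ : ℝ, μ ≠ 0 → Module.End.HasEigenvalue (P + Q) μ → 1 - p ≤ μ)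
    (f : V) :
    ⟪P f, Q f⟫ ≥ -p * ‖P f‖ * ‖Q f‖ := by
  have hP : P.IsSymmetricProjection := ⟨hPidem, hPsym⟩
  have hQ : Q.IsSymmetricProjection := ⟨hQidem, hQsym⟩
  set U := eigenspace (P + Q) 2
  set u := U.starProjection f
  set g := f - u
  have hu : u ∈ U := U.starProjection_apply_mem f
  have hg : g ∈ Uᗮ := U.sub_starProjection_mem_orthogonal f
  have hPu : P u = u := hP.apply_eq_self_of_mem_eigenspace_two hQ hu
  have hQu : Q u = u := hQ.apply_eq_self_of_mem_eigenspace_two hP (by rwa [add_comm])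
  have hQPg : ‖Q (P g)‖ ≤ p * ‖P g‖ := hP.norm_apply_apply_le hQ hp0 hev hg
  have hPgQg : -p * ‖P g‖ * ‖Q g‖ ≤ ⟪P g, Q g⟫ := calc
    -p * ‖P g‖ * ‖Q g‖ ≤ -(‖Q (P g)‖ * ‖Q g‖) := by
      nlinarith [mul_le_mul_of_nonneg_right hQPg (norm_nonneg (Q g))]
    _ ≤ ⟪Q (P g), Q g⟫ := neg_le_of_abs_le (abs_real_inner_le_norm _ _)
    _ = ⟪P g, Q g⟫ := by rw [hQsym]; exact congrArg _ (LinearMap.congr_fun hQidem g)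
  have hf : f = u + g := (add_sub_cancel u f).symm
  rw [hf, map_add, map_add, hPu, hQu]
  refine neg_mul_norm_mul_norm_le_inner_add_add hp0 ?_ ?_ hPgQg
  · rw [← hPsym, hPu]
    exact Submodule.inner_right_of_mem_orthogonal hu hg
  · rw [← hQsym, hQu]
    exact Submodule.inner_right_of_mem_orthogonal hu hg

theorem stmt_0 {V : Type*} [NormedAddCommGroup V] [InnerProductSpace ℝ V]
    [FiniteDimensional ℝ V]
    (P Q : V →ₗ[ℝ] V)
    (hPidem : P ∘ₗ P = P) (hPsym : LinearMap.IsSymmetric P)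
    (hQidem : Q ∘ₗ Q = Q) (hQsym : LinearMap.IsSymmetric Q)
    (p : ℝ) (hp0 : 0 ≤ p) (hp1 : p < 1)
    (hev : ∀ μ : ℝ, μ ≠ 0 → Module.End.HasEigenvalue (P + Q) μ → 1 - p ≤ μ)
    (f : V) :
    ⟪P f, Q f⟫ ≥ -p * ‖P f‖ * ‖Q f‖ :=
  stmt_0_general P Q hPidem hPsym hQidem hQsym p hp0 hev f
end

section
/- For real numbers v₁, …, v_{n-1} and m ≥ 0, one has ∑_{r=1}^{n-1} v_r² - 2m ∑_{r=1}^{n-2} v_r v_{r+1} ≥ (1 - 2m·cos(π/n)) ∑_{r=1}^{n-1} v_r². -/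
open scoped Real

lemma amgm_wt (a b x y : ℝ) (ha : 0 < a) (hb : 0 < b) :
    x * y ≤ b / (2 * a) * x ^ 2 + a / (2 * b) * y ^ 2 := by
  rw [div_mul_eq_mul_div, div_mul_eq_mul_div,
    div_add_div _ _ (by positivity) (by positivity), le_div_iff₀ (by positivity)]
  nlinarith [sq_nonneg (b * x - a * y)]

theorem stmt_5 (n : ℕ) (hn : 2 ≤ n) (m : ℝ) (hm : 0 ≤ m) (v : ℕ → ℝ) :
    ∑ r ∈ Finset.Icc 1 (n - 1), (v r) ^ 2
      - 2 * m * ∑ r ∈ Finset.Icc 1 (n - 2), v r * v (r + 1)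
    ≥ (1 - 2 * m * Real.cos (π / n)) * ∑ r ∈ Finset.Icc 1 (n - 1), (v r) ^ 2 := by
  have hn0 : (0:ℝ) < n := by positivity
  set θ : ℝ := π / n with hθ
  have hθpos : 0 < θ := by positivity
  set s : ℕ → ℝ := fun r => Real.sin (r * θ) with hs
  have hspos : ∀ r : ℕ, 1 ≤ r → r ≤ n - 1 → 0 < s r := by
    intro r h1 h2
    apply Real.sin_pos_of_pos_of_lt_pi
    · have : (1:ℝ) ≤ r := by exact_mod_cast h1
      nlinarith
    · have hrn : (r:ℝ) < n := by exact_mod_cast (by omega : r < n)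
      rw [hθ, mul_div_assoc', div_lt_iff₀ hn0]
      nlinarith [Real.pi_pos]
  set f : ℕ → ℝ := fun r => s (r + 1) / (2 * s r) * (v r) ^ 2 with hf
  set g : ℕ → ℝ := fun r => s (r - 1) / (2 * s r) * (v r) ^ 2 with hg
  -- pointwise inequality
  have hpt : ∀ r ∈ Finset.Icc 1 (n - 2), v r * v (r + 1) ≤ f r + g (r + 1) := by
    intro r hr
    rw [Finset.mem_Icc] at hr
    have h1 : 0 < s r := hspos r hr.1 (by omega)
    have h2 : 0 < s (r + 1) := hspos (r + 1) (by omega) (by omega)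
    have : g (r + 1) = s r / (2 * s (r + 1)) * (v (r + 1)) ^ 2 := by
      simp [hg]
    rw [this, hf]
    exact amgm_wt (s r) (s (r + 1)) (v r) (v (r + 1)) h1 h2
  -- vanishing boundary terms
  have hfn : f (n - 1) = 0 := by
    have he : ((n - 1 : ℕ) + 1) = n := by omega
    have : s n = 0 := by
      have : ((n:ℝ)) * θ = π := by
        rw [hθ]; field_simp
      simp [hs, this]
    rw [hf]; simp only [he, this]; simp
  have hg1 : g 1 = 0 := by
    rw [hg]; simp [hs]
  -- sum over f
  have hsumf : ∑ r ∈ Finset.Icc 1 (n - 2), f r = ∑ r ∈ Finset.Icc 1 (n - 1), f r := by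
    have : Finset.Icc 1 (n - 2) = (Finset.Icc 1 (n - 1)).erase (n - 1) := by
      rw [Finset.Icc_erase_right]
      have : n - 1 = (n - 2) + 1 := by omega
      rw [this, Finset.Ico_add_one_right_eq_Icc]
    rw [this]
    exact Finset.sum_erase _ hfn
  -- sum over g, reindexed
  have hsumg : ∑ r ∈ Finset.Icc 1 (n - 2), g (r + 1) = ∑ r ∈ Finset.Icc 1 (n - 1), g r := by
    have h1 : ∑ r ∈ Finset.Icc 1 (n - 2), g (r + 1) = ∑ r ∈ Finset.Icc 2 (n - 1), g r := by
      have hmap : (Finset.Icc 1 (n - 2)).map (addRightEmbedding 1) = Finset.Icc 2 (n - 1) := by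
        rw [Finset.map_add_right_Icc]
        congr 1
        omega
      rw [← hmap, Finset.sum_map]
      rfl
    rw [h1]
    have : Finset.Icc 2 (n - 1) = (Finset.Icc 1 (n - 1)).erase 1 := by
      rw [Finset.Icc_erase_left]
      rw [← Finset.Icc_add_one_left_eq_Ioc]; rfl
    rw [this]
    exact Finset.sum_erase _ hg1
  -- the eigen-identity
  have hid : ∀ r ∈ Finset.Icc 1 (n - 1), f r + g r = Real.cos θ * (v r) ^ 2 := by
    intro r hr
    rw [Finset.mem_Icc] at hr
    have h1 : 0 < s r := hspos r hr.1 hr.2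
    have htrig : s (r + 1) + s (r - 1) = 2 * s r * Real.cos θ := by
      have hc : ((r - 1 : ℕ) : ℝ) = (r : ℝ) - 1 := by
        have := hr.1; push_cast [Nat.cast_sub this]; ring
      simp only [hs]
      push_cast
      rw [hc, add_mul, sub_mul, one_mul, Real.sin_add, Real.sin_sub]
      ring
    rw [hf, hg]
    field_simp
    nlinarith [htrig]
  -- key inequality
  have key : ∑ r ∈ Finset.Icc 1 (n - 2), v r * v (r + 1)
      ≤ Real.cos θ * ∑ r ∈ Finset.Icc 1 (n - 1), (v r) ^ 2 := by
    calc ∑ r ∈ Finset.Icc 1 (n - 2), v r * v (r + 1)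
        ≤ ∑ r ∈ Finset.Icc 1 (n - 2), (f r + g (r + 1)) := Finset.sum_le_sum hpt
      _ = ∑ r ∈ Finset.Icc 1 (n - 1), (f r + g r) := by
          rw [Finset.sum_add_distrib, Finset.sum_add_distrib, hsumf, hsumg]
      _ = ∑ r ∈ Finset.Icc 1 (n - 1), Real.cos θ * (v r) ^ 2 := Finset.sum_congr rfl hid
      _ = Real.cos θ * ∑ r ∈ Finset.Icc 1 (n - 1), (v r) ^ 2 := by
          rw [Finset.mul_sum]
  nlinarith [mul_le_mul_of_nonneg_left key hm]
end

section
/- Let p be a probability vector on pairs of distinct indices of [n] (i.e., 0 < p_{i,j} < 1 and p_{j,i} = 1 - p_{i,j}) that is regular, meaning p_{i-1,i} ≥ 1/2 for 2 ≤ i ≤ n, p_{i-1,j} ≥ p_{i,j} for 2 ≤ i < j ≤ n, and p_{i,j+1} ≥ p_{i,j} for 1 ≤ i < j ≤ n-1. Then for all 1 ≤ i < j < k ≤ n, √(p_{i,j}·p_{j,k}·p_{k,i} + p_{k,j}·p_{j,i}·p_{i,k}) ≤ 1/2. -/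
theorem stmt_6 (n : ℕ) (p : ℕ → ℕ → ℝ)
    (hprob : ∀ i j, 1 ≤ i → i ≤ n → 1 ≤ j → j ≤ n → i ≠ j →
      0 < p i j ∧ p i j < 1 ∧ p j i = 1 - p i j)
    (hreg1 : ∀ i, 2 ≤ i → i ≤ n → 1/2 ≤ p (i - 1) i)
    (hreg2 : ∀ i j, 2 ≤ i → i < j → j ≤ n → p i j ≤ p (i - 1) j)
    (hreg3 : ∀ i j, 1 ≤ i → i < j → j ≤ n - 1 → p i j ≤ p i (j + 1)) :
    ∀ i j k, 1 ≤ i → i < j → j < k → k ≤ n →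
      Real.sqrt (p i j * p j k * p k i + p k j * p j i * p i k) ≤ 1 / 2 := by
  have mono3 : ∀ i j k, 1 ≤ i → i < j → j ≤ k → k ≤ n → p i j ≤ p i k := by
    intro i j k hi hij hjk hk
    induction k, hjk using Nat.le_induction with
    | base => exact le_refl _
    | succ k hk' ih =>
      have h1 : p i j ≤ p i k := ih (by omega)
      have h2 : p i k ≤ p i (k + 1) := hreg3 i k hi (by omega) (by omega)
      linarith
  have mono2 : ∀ i j k, 1 ≤ i → i ≤ j → j < k → k ≤ n → p j k ≤ p i k := by
    intro i j k hi hij hjk hk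
    induction j, hij using Nat.le_induction with
    | base => exact le_refl _
    | succ j hj ih =>
      have h1 : p (j + 1) k ≤ p ((j + 1) - 1) k := hreg2 (j + 1) k (by omega) hjk (by omega)
      simp only [Nat.add_sub_cancel] at h1
      have h2 : p j k ≤ p i k := ih (by omega)
      linarith
  have half : ∀ i j, 1 ≤ i → i < j → j ≤ n → 1/2 ≤ p i j := by
    intro i j hi hij hj
    have h1 : 1/2 ≤ p ((i + 1) - 1) (i + 1) := hreg1 (i + 1) (by omega) (by omega)
    simp only [Nat.add_sub_cancel] at h1
    have h2 : p i (i + 1) ≤ p i j := mono3 i (i + 1) j hi (by omega) (by omega) hj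
    linarith
  intro i j k hi hij hjk hk
  obtain ⟨hij0, hij1, hji⟩ := hprob i j hi (by omega) (by omega) (by omega) (by omega)
  obtain ⟨hjk0, hjk1, hkj⟩ := hprob j k (by omega) (by omega) (by omega) hk (by omega)
  obtain ⟨hik0, hik1, hki⟩ := hprob i k hi (by omega) (by omega) hk (by omega)
  set a := p i j
  set b := p j k
  set c := p i k
  have ha : 1/2 ≤ a := half i j hi hij (by omega)
  have hb : 1/2 ≤ b := half j k (by omega) hjk hk
  have hca : a ≤ c := mono3 i j k hi hij (by omega) hk
  rw [hji, hkj, hki]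
  have key : a * b * (1 - c) + (1 - b) * (1 - a) * c ≤ 1/4 := by
    nlinarith [mul_nonneg (sub_nonneg.mpr hca) (by linarith : (0:ℝ) ≤ a + b - 1),
      sq_nonneg (2*a - 1)]
  calc Real.sqrt (a * b * (1 - c) + (1 - b) * (1 - a) * c)
      ≤ Real.sqrt (1/4) := Real.sqrt_le_sqrt key
    _ = 1/2 := by
        rw [show (1/4 : ℝ) = (1/2)^2 by norm_num, Real.sqrt_sq (by norm_num)]
end

section
/- Let a, b, c ∈ [1/2, 1] with c ≥ max{a, b}. Then a·b·(1-c) + (1-a)·(1-b)·c ≤ 1/4. -/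
theorem stmt_7 (a b c : ℝ) (ha : a ∈ Set.Icc (1/2 : ℝ) 1) (hb : b ∈ Set.Icc (1/2 : ℝ) 1)
    (hc : c ∈ Set.Icc (1/2 : ℝ) 1) (hca : a ≤ c) (hcb : b ≤ c) :
    a * b * (1 - c) + (1 - a) * (1 - b) * c ≤ 1 / 4 := by
  obtain ⟨ha1, ha2⟩ := ha
  obtain ⟨hb1, hb2⟩ := hb
  obtain ⟨hc1, hc2⟩ := hc
  nlinarith [mul_nonneg (sub_nonneg.2 hca) (sub_nonneg.2 hcb), mul_nonneg (sub_nonneg.2 ha1) (sub_nonneg.2 hb1), mul_nonneg (sub_nonneg.2 hc1) (sub_nonneg.2 hc1), mul_nonneg (sub_nonneg.2 ha2) (sub_nonneg.2 hb2), sq_nonneg (a+b-2*c), sq_nonneg (a-b), sq_nonneg (2*c-1)]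
end

section
/- Let P and Q be orthogonal projections on a finite-dimensional real inner product space, let W = Im(P) ∩ Im(Q), and suppose f ∈ W^⊥ is a unit vector with ‖PQf‖ = σ > 0 equal to the operator norm of PQ restricted to W^⊥. Set g = σ^{-1}·PQf. Then g ≠ f and (P+Q)(g - f) = (1-σ)(g - f), with σ < 1; i.e., 1 - σ is a non-zero eigenvalue of P + Q. -/
open scoped RealInnerProductSpace

private lemma idem_aux {V : Type*} [NormedAddCommGroup V] [InnerProductSpace ℝ V]
    {P : V →ₗ[ℝ] V} (hPidem : P ∘ₗ P = P) (x : V) : P (P x) = P x :=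
  DFunLike.congr_fun hPidem x

private lemma inner_proj_aux {V : Type*} [NormedAddCommGroup V] [InnerProductSpace ℝ V]
    {P : V →ₗ[ℝ] V} (hPidem : P ∘ₗ P = P) (hPsym : LinearMap.IsSymmetric P) (x : V) :
    ⟪x, P x⟫ = ‖P x‖ ^ 2 := by
  rw [← real_inner_self_eq_norm_sq, hPsym x (P x), idem_aux hPidem]

private lemma proj_contract_aux {V : Type*} [NormedAddCommGroup V] [InnerProductSpace ℝ V]
    {P : V →ₗ[ℝ] V} (hPidem : P ∘ₗ P = P) (hPsym : LinearMap.IsSymmetric P) (x : V) :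
    ‖P x‖ ≤ ‖x‖ := by
  have h1 : ‖P x‖ ^ 2 = ⟪x, P x⟫ := (inner_proj_aux hPidem hPsym x).symm
  have h2 : ⟪x, P x⟫ ≤ ‖x‖ * ‖P x‖ := real_inner_le_norm x (P x)
  rcases eq_or_lt_of_le (norm_nonneg (P x)) with h | h
  · rw [← h]; exact norm_nonneg x
  · nlinarith

private lemma proj_sub_aux {V : Type*} [NormedAddCommGroup V] [InnerProductSpace ℝ V]
    {P : V →ₗ[ℝ] V} (hPidem : P ∘ₗ P = P) (hPsym : LinearMap.IsSymmetric P) (x : V) :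
    ‖x - P x‖ ^ 2 = ‖x‖ ^ 2 - ‖P x‖ ^ 2 := by
  have h1 : ⟪x, P x⟫ = ‖P x‖ ^ 2 := inner_proj_aux hPidem hPsym x
  rw [norm_sub_sq_real, h1]; ring

/-- `σ` is the operator norm of `PQ` restricted to `Wᗮ` (bound hypothesis `hbound`),
attained at the unit vector `f` (hypothesis `hσf`). -/
theorem stmt_9 {V : Type*} [NormedAddCommGroup V] [InnerProductSpace ℝ V]
    [FiniteDimensional ℝ V]
    (P Q : V →ₗ[ℝ] V)
    (hPidem : P ∘ₗ P = P) (hPsym : LinearMap.IsSymmetric P)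
    (hQidem : Q ∘ₗ Q = Q) (hQsym : LinearMap.IsSymmetric Q)
    (f : V) (hf : f ∈ (LinearMap.range P ⊓ LinearMap.range Q)ᗮ)
    (hfnorm : ‖f‖ = 1)
    (σ : ℝ) (hσpos : 0 < σ)
    (hσf : ‖P (Q f)‖ = σ)
    (hbound : ∀ g ∈ (LinearMap.range P ⊓ LinearMap.range Q)ᗮ, ‖P (Q g)‖ ≤ σ * ‖g‖) :
    σ⁻¹ • P (Q f) ≠ f ∧
    (P + Q) (σ⁻¹ • P (Q f) - f) = (1 - σ) • (σ⁻¹ • P (Q f) - f) ∧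
    σ < 1 := by
  set K := (LinearMap.range P ⊓ LinearMap.range Q)ᗮ with hK
  have hσne : σ ≠ 0 := ne_of_gt hσpos
  -- fixed points of P and Q on range P ⊓ range Q
  have hfix : ∀ u ∈ LinearMap.range P ⊓ LinearMap.range Q, P u = u ∧ Q u = u := by
    intro u hu
    obtain ⟨⟨y, hy⟩, ⟨z, hz⟩⟩ := Submodule.mem_inf.mp hu
    constructor
    · rw [← hy]; exact idem_aux hPidem y
    · rw [← hz]; exact idem_aux hQidem z
  -- K is invariant under P and Q
  have hPK : ∀ x ∈ K, P x ∈ K := by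
    intro x hx
    rw [Submodule.mem_orthogonal]
    intro u hu
    obtain ⟨hu1, _⟩ := hfix u hu
    rw [← hPsym u x, hu1]
    exact hx u hu
  have hQK : ∀ x ∈ K, Q x ∈ K := by
    intro x hx
    rw [Submodule.mem_orthogonal]
    intro u hu
    obtain ⟨_, hu2⟩ := hfix u hu
    rw [← hQsym u x, hu2]
    exact hx u hu
  -- the key eigenvector equation QPQf = σ² f
  set h : V := Q (P (Q f)) - (σ * σ) • f with hh
  have hhK : h ∈ K := by
    exact Submodule.sub_mem K (hQK _ (hPK _ (hQK f hf))) (Submodule.smul_mem K _ hf)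
  have hinner : ⟪P (Q f), P (Q h)⟫ = ‖h‖ ^ 2 + (σ * σ) * ⟪f, h⟫ := by
    have e1 : ⟪P (Q f), P (Q h)⟫ = ⟪Q (P (Q f)), h⟫ := by
      rw [← hPsym (P (Q f)) (Q h), idem_aux hPidem, hQsym (P (Q f)) h]
    have e2 : Q (P (Q f)) = h + (σ * σ) • f := by rw [hh]; abel
    rw [e1, e2, inner_add_left, real_inner_smul_left, real_inner_self_eq_norm_sq]
  have hzero : h = 0 := by
    set t : ℝ := (σ * σ)⁻¹ with ht
    have htpos : 0 < t := by positivity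
    have hmem : f + t • h ∈ K := Submodule.add_mem K hf (Submodule.smul_mem K _ hhK)
    have hb := hbound (f + t • h) hmem
    have hexp : P (Q (f + t • h)) = P (Q f) + t • P (Q h) := by
      simp [map_add, map_smul]
    rw [hexp] at hb
    have hsq : ‖P (Q f) + t • P (Q h)‖ ^ 2 ≤ σ ^ 2 * ‖f + t • h‖ ^ 2 := by
      have h1 : 0 ≤ ‖P (Q f) + t • P (Q h)‖ := norm_nonneg _
      have h2 : 0 ≤ σ * ‖f + t • h‖ := by positivity
      nlinarith [hb]
    rw [norm_add_sq_real, norm_add_sq_real] at hsq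
    rw [real_inner_smul_right, real_inner_smul_right, norm_smul, norm_smul] at hsq
    rw [hinner, hσf] at hsq
    simp only [Real.norm_eq_abs, abs_of_pos htpos, hfnorm] at hsq
    -- hsq : σ^2 + 2*(t*(‖h‖^2 + σ*σ*⟪f,h⟫)) + (t*‖PQh‖)^2 ≤ σ^2*(1 + 2*(t*⟪f,h⟫) + (t*‖h‖)^2)
    have hts : σ ^ 2 * t = 1 := by rw [ht, sq]; field_simp
    have e5 : σ ^ 2 * t ^ 2 = t := by rw [ht, sq]; field_simp
    have key : 2 * (t * ‖h‖ ^ 2) + (t * ‖P (Q h)‖) ^ 2 ≤ σ ^ 2 * t ^ 2 * ‖h‖ ^ 2 := by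
      nlinarith [hsq, hts]
    rw [e5] at key
    have htA : t * ‖h‖ ^ 2 ≤ 0 := by nlinarith [sq_nonneg (t * ‖P (Q h)‖)]
    have : ‖h‖ = 0 := by
      by_contra hne
      have h1 : 0 < ‖h‖ ^ 2 := by positivity
      nlinarith [mul_pos htpos h1]
    exact norm_eq_zero.mp this
  have hT : Q (P (Q f)) = (σ * σ) • f := by
    have h0 := hzero
    rw [hh] at h0
    exact sub_eq_zero.mp h0
  -- Q f = f
  have hQf : Q f = f := by
    have h1 := congrArg Q hT
    rw [idem_aux hQidem, hT, map_smul] at h1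
    have h2 : (σ * σ) • f = (σ * σ) • Q f := h1
    have := smul_right_injective V (by positivity : σ * σ ≠ 0) h2.symm
    exact this
  set b : V := P (Q f) with hb
  have hPb : P b = b := idem_aux hPidem (Q f)
  have hQb : Q b = (σ * σ) • f := hT
  have hPf : P f = b := by rw [hb, hQf]
  have hnb : ‖b‖ = σ := hσf
  -- σ < 1
  have hσle : σ ≤ 1 := by
    rw [← hnb, ← hfnorm, ← hPf]
    exact proj_contract_aux hPidem hPsym f
  have hσlt : σ < 1 := by
    rcases lt_or_eq_of_le hσle with h1 | h1
    · exact h1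
    · exfalso
      have hne : ‖f - P f‖ ^ 2 = 0 := by
        rw [proj_sub_aux hPidem hPsym, hPf, hnb, hfnorm, h1]; ring
      have hPff : P f = f := by
        have := pow_eq_zero_iff (n := 2) (by norm_num) |>.mp hne
        rw [norm_eq_zero, sub_eq_zero] at this
        exact this.symm
      have hfW : f ∈ LinearMap.range P ⊓ LinearMap.range Q := by
        refine Submodule.mem_inf.mpr ⟨⟨f, hPff⟩, ⟨f, hQf⟩⟩
      have : ⟪f, f⟫ = 0 := hf f hfW
      rw [real_inner_self_eq_norm_sq, hfnorm] at this
      norm_num at this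
  refine ⟨?_, ?_, hσlt⟩
  · intro hcon
    have h1 : b = σ • f := by
      have := congrArg (fun x => σ • x) hcon
      simp only [smul_smul, mul_inv_cancel₀ hσne, one_smul] at this
      exact this
    have h2 : ⟪f, b⟫ = ‖b‖ ^ 2 := by rw [← hPf]; exact inner_proj_aux hPidem hPsym f
    rw [h1, real_inner_smul_right, real_inner_self_eq_norm_sq, hfnorm, norm_smul,
      Real.norm_eq_abs, abs_of_pos hσpos, hfnorm] at h2
    have : σ = 1 := by nlinarith
    linarith
  · have hQsmul : Q (σ⁻¹ • b - f) = σ • f - f := by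
      rw [map_sub, map_smul, hQb, hQf, smul_smul]
      congr 2
      field_simp
    have hPsmul : P (σ⁻¹ • b - f) = σ⁻¹ • b - b := by
      rw [map_sub, map_smul, hPb, hPf]
    rw [LinearMap.add_apply, hPsmul, hQsmul]
    rw [sub_smul, one_smul, smul_sub, smul_smul, mul_inv_cancel₀ hσne, one_smul]
    abel
end

section
/- For the 6×6 matrix M(a,b,c) = [[a+b, 1-a, 1-b, 0, 0, 0], [a, (1-a)+c, 0, 1-c, 0, 0], [b, 0, c+(1-b), 0, 1-c, 0], [0, c, 0, b+(1-c), 0, 1-b], [0, 0, c, 0, (1-c)+a, 1-a], [0, 0, 0, b, a, (1-b)+(1-a)]] with 0 < a, b, c < 1 (here a = p_{i,j}, b = p_{j,k}, c = p_{i,k}), the smallest positive eigenvalue of M equals 1 - √(a·b·(1-c) + (1-a)·(1-b)·c). -/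
set_option maxHeartbeats 1600000 in
set_option maxRecDepth 10000 in
private lemma det_pattern6 (d0 e0 f0 a1 d1 g1 b2 d2 g2 c3 d3 h3 c4 d4 h4 b5 a5 d5 : ℝ) :
    (!![d0, e0, f0, 0, 0, 0;
        a1, d1, 0, g1, 0, 0;
        b2, 0, d2, 0, g2, 0;
        0, c3, 0, d3, 0, h3;
        0, 0, c4, 0, d4, h4;
        0, 0, 0, b5, a5, d5]).det
    = a1*a5*d2*d3*e0*h4 - a1*b5*c3*f0*g2*h4 - a1*b5*c4*e0*g2*h3 + a1*b5*d2*d4*e0*h3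
      + a1*c4*d3*d5*e0*g2 - a1*d2*d3*d4*d5*e0 - a5*b2*c3*f0*g1*h4 - a5*b2*c4*e0*g1*h3
      + a5*b2*d1*d3*f0*h4 + a5*c3*d0*d2*g1*h4 - a5*d0*d1*d2*d3*h4 + b2*b5*d1*d4*f0*h3
      + b2*c3*d4*d5*f0*g1 - b2*d1*d3*d4*d5*f0 + b5*c4*d0*d1*g2*h3 - b5*d0*d1*d2*d4*h3
      + c3*c4*d0*d5*g1*g2 - c3*d0*d2*d4*d5*g1 - c4*d0*d1*d3*d5*g2 + d0*d1*d2*d3*d4*d5 := by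
  simp [Matrix.det_succ_row_zero, Fin.sum_univ_succ]
  norm_num [Fin.succAbove, Fin.lt_def]
  simp only [Matrix.cons_val, Fin.castSucc]
  ring

private lemma det_formula6 (a b c x : ℝ) :
    (!![a + b - x, 1 - a, 1 - b, 0, 0, 0;
        a, (1 - a) + c - x, 0, 1 - c, 0, 0;
        b, 0, c + (1 - b) - x, 0, 1 - c, 0;
        0, c, 0, b + (1 - c) - x, 0, 1 - b;
        0, 0, c, 0, (1 - c) + a - x, 1 - a;
        0, 0, 0, b, a, (1 - b) + (1 - a) - x]).det
    = x * (x - 2) * ((x - 1)^2 - (a * b * (1 - c) + (1 - a) * (1 - b) * c))^2 := by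
  rw [det_pattern6]
  ring

private lemma eig_iff_det (N : Matrix (Fin 6) (Fin 6) ℝ) (μ : ℝ) :
    Module.End.HasEigenvalue (Matrix.toLin' N) μ ↔ (N - μ • 1).det = 0 := by
  rw [← Matrix.exists_mulVec_eq_zero_iff, Module.End.hasEigenvalue_iff, Submodule.ne_bot_iff]
  constructor
  · rintro ⟨v, hv, hv0⟩
    refine ⟨v, hv0, ?_⟩
    rw [Module.End.mem_eigenspace_iff, Matrix.toLin'_apply] at hv
    rw [Matrix.sub_mulVec, hv, Matrix.smul_mulVec, Matrix.one_mulVec, sub_self]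
  · rintro ⟨v, hv0, hv⟩
    refine ⟨v, ?_, hv0⟩
    rw [Module.End.mem_eigenspace_iff, Matrix.toLin'_apply]
    rw [Matrix.sub_mulVec, Matrix.smul_mulVec, Matrix.one_mulVec, sub_eq_zero] at hv
    exact hv

theorem stmt_12 (a b c : ℝ) (ha : 0 < a) (ha1 : a < 1) (hb : 0 < b) (hb1 : b < 1)
    (hc : 0 < c) (hc1 : c < 1)
    (M : Matrix (Fin 6) (Fin 6) ℝ)
    (hM : M = !![a + b, 1 - a, 1 - b, 0, 0, 0;
                 a, (1 - a) + c, 0, 1 - c, 0, 0;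
                 b, 0, c + (1 - b), 0, 1 - c, 0;
                 0, c, 0, b + (1 - c), 0, 1 - b;
                 0, 0, c, 0, (1 - c) + a, 1 - a;
                 0, 0, 0, b, a, (1 - b) + (1 - a)]) :
    Module.End.HasEigenvalue (Matrix.toLin' M)
      (1 - Real.sqrt (a * b * (1 - c) + (1 - a) * (1 - b) * c)) ∧
    0 < 1 - Real.sqrt (a * b * (1 - c) + (1 - a) * (1 - b) * c) ∧
    (∀ μ : ℝ, 0 < μ → Module.End.HasEigenvalue (Matrix.toLin' M) μ →
      1 - Real.sqrt (a * b * (1 - c) + (1 - a) * (1 - b) * c) ≤ μ) := by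
  set s : ℝ := a * b * (1 - c) + (1 - a) * (1 - b) * c with hs
  have hc1' : (0:ℝ) ≤ 1 - c := by linarith
  have ha1' : (0:ℝ) ≤ 1 - a := by linarith
  have hb1' : (0:ℝ) ≤ 1 - b := by linarith
  have hs0 : 0 ≤ s := by
    have h1 : 0 ≤ a * b * (1 - c) := mul_nonneg (mul_nonneg ha.le hb.le) hc1'
    have h2 : 0 ≤ (1 - a) * (1 - b) * c := mul_nonneg (mul_nonneg ha1' hb1') hc.le
    linarith
  have hs1 : s < 1 := by
    have h1 : 0 ≤ (1 - a) * b * (1 - c) := mul_nonneg (mul_nonneg ha1' hb.le) hc1'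
    have h2 : 0 ≤ a * (1 - b) * c := mul_nonneg (mul_nonneg ha.le hb1') hc.le
    have h3 : 0 ≤ (1 - b) * (1 - c) := mul_nonneg hb1' hc1'
    have h4 : 0 < b * c := mul_pos hb hc
    nlinarith
  have hsq0 : 0 ≤ Real.sqrt s := Real.sqrt_nonneg s
  have hsq1 : Real.sqrt s < 1 := by
    rw [show (1:ℝ) = Real.sqrt 1 by simp]
    exact Real.sqrt_lt_sqrt hs0 hs1
  have hsqsq : Real.sqrt s ^ 2 = s := Real.sq_sqrt hs0
  have hdet : ∀ x : ℝ, (M - x • 1).det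
      = x * (x - 2) * ((x - 1)^2 - s)^2 := by
    intro x
    have hEq : M - x • (1 : Matrix (Fin 6) (Fin 6) ℝ) =
        !![a + b - x, 1 - a, 1 - b, 0, 0, 0;
           a, (1 - a) + c - x, 0, 1 - c, 0, 0;
           b, 0, c + (1 - b) - x, 0, 1 - c, 0;
           0, c, 0, b + (1 - c) - x, 0, 1 - b;
           0, 0, c, 0, (1 - c) + a - x, 1 - a;
           0, 0, 0, b, a, (1 - b) + (1 - a) - x] := by
      subst hM
      ext i j
      fin_cases i <;> fin_cases j <;>
        simp [Matrix.one_apply, Matrix.cons_val_succ, show ((5:Fin 6)) = Fin.succ 4 from rfl,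
          Fin.ext_iff] <;>
        try (intro h; exact absurd h (by decide))
    rw [hEq, det_formula6]
  have hiff : ∀ μ : ℝ, Module.End.HasEigenvalue (Matrix.toLin' M) μ ↔
      μ * (μ - 2) * ((μ - 1)^2 - s)^2 = 0 := by
    intro μ
    rw [eig_iff_det, hdet μ]
  refine ⟨?_, ?_, ?_⟩
  · rw [hiff]
    have h0 : ((1 - Real.sqrt s) - 1)^2 - s = 0 := by
      rw [show (1 - Real.sqrt s) - 1 = -Real.sqrt s by ring, neg_pow]
      rw [show (-1:ℝ)^2 * Real.sqrt s ^ 2 = Real.sqrt s ^ 2 by ring, hsqsq]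
      ring
    rw [h0]
    ring
  · linarith
  · intro μ hμ hμe
    rw [hiff] at hμe
    rcases mul_eq_zero.mp hμe with h | h
    · rcases mul_eq_zero.mp h with h0 | h2
      · linarith
      · have : μ = 2 := by linarith
        linarith
    · have h' : (μ - 1)^2 = s := by
        have h'' : (μ - 1)^2 - s = 0 := sq_eq_zero_iff.mp h
        linarith
      have habs : |μ - 1| = Real.sqrt s := by
        rw [← Real.sqrt_sq_eq_abs, h']
      rcases abs_cases (μ - 1) with ⟨he, _⟩ | ⟨he, _⟩
      · have : μ - 1 = Real.sqrt s := by rw [← he, habs]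
        linarith
      · have : -(μ - 1) = Real.sqrt s := by rw [← he, habs]
        linarith
end

section
/- Let E_1, …, E_{n-1} be orthogonal projections on a finite-dimensional real inner product space such that: (i) E_r E_s = E_s E_r whenever |r-s| > 1; (ii) every non-zero eigenvalue of E_r + E_{r+1} is at least 1 - m for each 1 ≤ r ≤ n-2, where 0 ≤ m < 1. Let K = (1/(n-1)) ∑_r E_r. Then for every vector f, ⟨f, K²f⟩ ≥ ((1 - 2m·cos(π/n))/(n-1)) · ⟨f, Kf⟩. -/
set_option maxHeartbeats 1000000

open scoped RealInnerProductSpace Real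
open Finset

lemma tridiag (N : ℕ) (hN : 1 ≤ N) (α : ℕ → ℝ) (hα : ∀ j, N ≤ j → α j = 0) :
    ∑ j ∈ Finset.range N, α j * α (j+1) ≤
      Real.cos (π / (N + 1)) * ∑ j ∈ Finset.range N, (α j)^2 := by
  set θ : ℝ := π / (N+1) with hθ
  have hNpos : (0:ℝ) < (N:ℝ) + 1 := by positivity
  set W : ℕ → ℝ := fun j => Real.sin (j * θ) with hW
  have hWpos : ∀ k, 1 ≤ k → k ≤ N → 0 < W k := by
    intro k h1 h2
    apply Real.sin_pos_of_pos_of_lt_pi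
    · have : (0:ℝ) < (k:ℝ) := by exact_mod_cast h1
      have hθpos : 0 < θ := by rw [hθ]; positivity
      positivity
    · have hθpos : 0 < θ := by rw [hθ]; positivity
      have hkN : (k:ℝ) < (N:ℝ)+1 := by exact_mod_cast Nat.lt_succ_of_le h2
      calc (k:ℝ) * θ < ((N:ℝ)+1) * θ := by nlinarith
        _ = π := by rw [hθ]; field_simp
  have hWN1 : W (N+1) = 0 := by
    have : ((N:ℕ)+1 : ℝ) * θ = π := by push_cast [hθ]; field_simp
    rw [hW]; simp only []
    rw [show ((N+1 : ℕ) : ℝ) = (N:ℝ)+1 by push_cast; ring]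
    rw [show ((N:ℝ)+1) * θ = π from by rw [hθ]; field_simp]
    exact Real.sin_pi
  have hW0 : W 0 = 0 := by simp [hW]
  have key : ∀ j < N, 2 * (α j * α (j+1)) ≤
      W (j+2) / W (j+1) * (α j)^2 + W (j+1) / W (j+2) * (α (j+1))^2 := by
    intro j hj
    rcases Nat.lt_or_ge (j+1) N with h | h
    · have h1 : 0 < W (j+1) := hWpos _ (by omega) (by omega)
      have h2 : 0 < W (j+2) := hWpos _ (by omega) (by omega)
      rw [div_mul_eq_mul_div, div_mul_eq_mul_div,
        div_add_div _ _ (ne_of_gt h1) (ne_of_gt h2), le_div_iff₀ (by positivity)]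
      nlinarith [sq_nonneg (W (j+2) * α j - W (j+1) * α (j+1))]
    · have hjN : j + 1 = N := by omega
      have hz : α (j+1) = 0 := hα _ (by omega)
      have : W (j+2) = 0 := by rw [show j+2 = N+1 by omega]; exact hWN1
      rw [hz, this]
      simp
  have iden : ∀ j < N, W (j+2) / W (j+1) + W j / W (j+1) = 2 * Real.cos θ := by
    intro j hj
    have h1 : 0 < W (j+1) := hWpos _ (by omega) (by omega)
    have hsum : W (j+2) + W j = 2 * Real.cos θ * W (j+1) := by
      rw [hW]; simp only []
      push_cast
      rw [show ((j:ℝ)+2) * θ = ((j:ℝ)+1)*θ + θ by ring,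
        show (j:ℝ) * θ = ((j:ℝ)+1)*θ - θ by ring, Real.sin_add, Real.sin_sub]
      ring
    rw [← add_div, hsum, mul_div_assoc, div_self (ne_of_gt h1)]
    ring
  have step : ∑ j ∈ range N, 2 * (α j * α (j+1)) ≤
      ∑ j ∈ range N, (W (j+2) / W (j+1) * (α j)^2 + W (j+1) / W (j+2) * (α (j+1))^2) := by
    apply Finset.sum_le_sum
    intro j hj
    exact key j (Finset.mem_range.mp hj)
  have shift : ∑ j ∈ range N, W (j+1) / W (j+2) * (α (j+1))^2
      = ∑ j ∈ range N, W j / W (j+1) * (α j)^2 := by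
    have h1 : ∑ j ∈ range (N+1), W j / W (j+1) * (α j)^2
        = ∑ j ∈ range N, W (j+1) / W (j+2) * (α (j+1))^2 + W 0 / W 1 * (α 0)^2 :=
      Finset.sum_range_succ' _ N
    have h2 : ∑ j ∈ range (N+1), W j / W (j+1) * (α j)^2
        = ∑ j ∈ range N, W j / W (j+1) * (α j)^2 + W N / W (N+1) * (α N)^2 :=
      Finset.sum_range_succ _ N
    rw [hα N le_rfl] at h2
    rw [hW0] at h1
    simp at h1 h2
    rw [← h1, h2]
  calc ∑ j ∈ range N, α j * α (j+1)
      = (∑ j ∈ range N, 2*(α j * α (j+1)))/2 := by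
        rw [Finset.sum_div]
        apply Finset.sum_congr rfl
        intro j hj; ring
    _ ≤ (∑ j ∈ range N, (W (j+2) / W (j+1) * (α j)^2 + W (j+1) / W (j+2) * (α (j+1))^2))/2 := by
        linarith [step]
    _ = (∑ j ∈ range N, (W (j+2) / W (j+1) + W j / W (j+1)) * (α j)^2)/2 := by
        rw [Finset.sum_add_distrib, shift, ← Finset.sum_add_distrib]
        congr 1
        apply Finset.sum_congr rfl
        intro j hj; ring
    _ = (∑ j ∈ range N, 2 * Real.cos θ * (α j)^2)/2 := by
        congr 1
        apply Finset.sum_congr rfl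
        intro j hj
        rw [iden j (Finset.mem_range.mp hj)]
    _ = Real.cos θ * ∑ j ∈ range N, (α j)^2 := by
        rw [← Finset.mul_sum]; ring

lemma scalar_group (m v p q u : ℝ) (hm : 0 ≤ m) (hv : 0 < v) (hv1 : v ≤ 1)
    (hvm : v ≤ m ∨ v = 1) (hp : 0 ≤ p) (hq : 0 ≤ q)
    (hu : u^2 ≤ p * ((1-v)*(1+v)*q)) :
    -(m * Real.sqrt (((1+v)*p + (1-v)*q)^2 - (2*u)^2)) ≤
      ((1+v)^2*p + (1-v)^2*q) - ((1+v)*p + (1-v)*q) := by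
  set π' := (1+v)*p with hπ
  set κ := (1-v)*q with hκ
  have hπ0 : 0 ≤ π' := by positivity
  have hκ0 : 0 ≤ κ := by nlinarith
  have hRHS : ((1+v)^2*p + (1-v)^2*q) - ((1+v)*p + (1-v)*q) = v * (π' - κ) := by
    rw [hπ, hκ]; ring
  rw [hRHS]
  have h4 : (2*u)^2 ≤ 4 * π' * κ := by rw [hπ, hκ]; nlinarith
  have hsq : (π' - κ)^2 ≤ (π' + κ)^2 - (2*u)^2 := by nlinarith
  have hsqrt : |π' - κ| ≤ Real.sqrt ((π' + κ)^2 - (2*u)^2) := by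
    rw [← Real.sqrt_sq_eq_abs]
    exact Real.sqrt_le_sqrt hsq
  rcases hvm with hvm | hvm
  · rcases le_or_gt κ π' with h | h
    · have : 0 ≤ v * (π' - κ) := by nlinarith
      have h0 : 0 ≤ Real.sqrt ((π' + κ)^2 - (2*u)^2) := Real.sqrt_nonneg _
      nlinarith
    · have habs : |π' - κ| = κ - π' := by rw [abs_of_neg (by linarith)]; ring
      rw [habs] at hsqrt
      nlinarith [Real.sqrt_nonneg ((π' + κ)^2 - (2*u)^2)]
  · subst hvm
    have hκz : κ = 0 := by rw [hκ]; ring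
    rw [hκz]
    have h0 : 0 ≤ Real.sqrt ((π' + 0)^2 - (2*u)^2) := Real.sqrt_nonneg _
    nlinarith

lemma pair_lemma {V : Type*} [NormedAddCommGroup V] [InnerProductSpace ℝ V]
    [FiniteDimensional ℝ V]
    (P Q : V →ₗ[ℝ] V) (hPi : P ∘ₗ P = P) (hPs : P.IsSymmetric)
    (hQi : Q ∘ₗ Q = Q) (hQs : Q.IsSymmetric)
    (m : ℝ) (hm0 : 0 ≤ m)
    (hev : ∀ μ : ℝ, μ ≠ 0 → Module.End.HasEigenvalue (P + Q) μ → 1 - m ≤ μ)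
    (f : V) : -(m * ‖P f‖ * ‖Q f‖) ≤ ⟪P f, Q f⟫ := by
  classical
  set A : V →ₗ[ℝ] V := P + Q with hA
  set B : V →ₗ[ℝ] V := P - Q with hB
  have hPP : ∀ x, P (P x) = P x := fun x => DFunLike.congr_fun hPi x
  have hQQ : ∀ x, Q (Q x) = Q x := fun x => DFunLike.congr_fun hQi x
  have hAs : A.IsSymmetric := hPs.add hQs
  have hBs : B.IsSymmetric := hPs.sub hQs
  -- B ∘ B = 2A - A²
  have hBB : ∀ x, B (B x) = (2:ℝ) • A x - A (A x) := by
    intro x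
    simp only [hA, hB, LinearMap.sub_apply, LinearMap.add_apply, map_sub, map_add,
      hPP, hQQ, smul_sub, smul_add]
    module
  -- anticommutation: A∘B + B∘A = 2B
  have hAB : ∀ x, A (B x) + B (A x) = (2:ℝ) • B x := by
    intro x
    simp only [hA, hB, LinearMap.sub_apply, LinearMap.add_apply, map_sub, map_add,
      hPP, hQQ]
    module
  -- ⟪x, P x⟫ = ‖P x‖²
  have hipP : ∀ x, ⟪x, P x⟫ = ‖P x‖^2 := by
    intro x
    rw [show P x = P (P x) from (hPP x).symm, ← hPs x (P x), hPP,
      real_inner_self_eq_norm_sq]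
  have hipQ : ∀ x, ⟪x, Q x⟫ = ‖Q x‖^2 := by
    intro x
    rw [show Q x = Q (Q x) from (hQQ x).symm, ← hQs x (Q x), hQQ,
      real_inner_self_eq_norm_sq]
  have hxAx : ∀ x, ⟪x, A x⟫ = ‖P x‖^2 + ‖Q x‖^2 := by
    intro x
    rw [hA]
    simp only [LinearMap.add_apply, inner_add_right]
    rw [hipP, hipQ]
  -- ‖B x‖² = 2⟪x,Ax⟫ - ‖Ax‖²
  have hBn : ∀ x, ‖B x‖^2 = 2*⟪x, A x⟫ - ‖A x‖^2 := by
    intro x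
    rw [← real_inner_self_eq_norm_sq, hBs x (B x), hBB, inner_sub_right,
      inner_smul_right, ← hAs x (A x), real_inner_self_eq_norm_sq]
  -- spectral setup
  set n := Module.finrank ℝ V with hn'
  have hn : Module.finrank ℝ V = n := rfl
  set e : OrthonormalBasis (Fin n) ℝ V := hAs.eigenvectorBasis hn with he
  set μ : Fin n → ℝ := hAs.eigenvalues hn with hμ
  have hAe : ∀ i, A (e i) = μ i • e i := by
    intro i
    have := hAs.apply_eigenvectorBasis hn i
    exact_mod_cast this
  have hnrm : ∀ i, ‖e i‖ = 1 := fun i => e.orthonormal.1 i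
  -- eigenvalue range
  have hrange : ∀ i, (|μ i - 1| ≤ m ∨ |μ i - 1| = 1) ∧ |μ i - 1| ≤ 1 := by
    intro i
    have hval : μ i = ‖P (e i)‖^2 + ‖Q (e i)‖^2 := by
      have h1 : ⟪e i, A (e i)⟫ = μ i := by
        rw [hAe i, real_inner_smul_right, real_inner_self_eq_norm_sq, hnrm i]
        ring
      rw [← h1, hxAx]
    have hPle : ∀ (R : V →ₗ[ℝ] V), R.IsSymmetric → (∀ x, ⟪x, R x⟫ = ‖R x‖^2) →
        ‖R (e i)‖^2 ≤ 1 := by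
      intro R hRs hRi
      have h1 : ‖R (e i)‖^2 ≤ ‖e i‖ * ‖R (e i)‖ := by
        rw [← hRi]
        exact real_inner_le_norm _ _
      rw [hnrm i, one_mul] at h1
      rcases le_or_gt ‖R (e i)‖ 1 with h | h
      · nlinarith [norm_nonneg (R (e i))]
      · nlinarith
    have h0 : 0 ≤ μ i := by rw [hval]; positivity
    have h2 : μ i ≤ 2 := by
      rw [hval]
      have := hPle P hPs hipP
      have := hPle Q hQs hipQ
      linarith
    refine ⟨?_, by rw [abs_le]; constructor <;> linarith⟩
    by_cases hz : μ i = 0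
    · right; rw [hz]; norm_num
    by_cases h2' : μ i = 2
    · right; rw [h2']; norm_num
    -- lower bound
    have hlow : 1 - m ≤ μ i := by
      apply hev (μ i) hz
      exact Module.End.hasEigenvalue_of_hasEigenvector
        ⟨Module.End.mem_eigenspace_iff.mpr (hAe i), by
          intro h; have hh := hnrm i; rw [h] at hh; simpa using hh⟩
    -- upper bound via B (e i)
    have hup : μ i ≤ 1 + m := by
      set y := B (e i) with hy
      have hAy : A y = (2 - μ i) • y := by
        have h1 := hAB (e i)
        have : A y = (2:ℝ) • y - B (A (e i)) := by
          rw [hy]; linear_combination (norm := module) h1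
        rw [this, hAe i, map_smul, sub_smul]
      have hyn : ‖y‖^2 = μ i * (2 - μ i) := by
        rw [hy, hBn (e i)]
        have h1 : ⟪e i, A (e i)⟫ = μ i := by
          rw [hAe i, real_inner_smul_right, real_inner_self_eq_norm_sq, hnrm i]; ring
        have h2 : ‖A (e i)‖^2 = (μ i)^2 := by
          rw [hAe i, norm_smul, mul_pow, hnrm i]
          simp [sq_abs]
        rw [h1, h2]; ring
      have hy0 : y ≠ 0 := by
        intro h
        have hpos : 0 < μ i * (2 - μ i) := by
          have h0' : 0 < μ i := lt_of_le_of_ne h0 (Ne.symm hz)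
          have h2'' : μ i < 2 := lt_of_le_of_ne h2 h2'
          nlinarith
        rw [h] at hyn
        simp at hyn
        rcases hyn with h' | h' <;> nlinarith
      have := hev (2 - μ i) (by intro h; apply h2'; linarith) 
        (Module.End.hasEigenvalue_of_hasEigenvector
          ⟨Module.End.mem_eigenspace_iff.mpr hAy, hy0⟩)
      linarith
    left
    rw [abs_le]
    constructor <;> linarith
  -- fiber decomposition
  set c : Fin n → ℝ := fun i => ⟪e i, f⟫ with hc
  set fs : ℝ → V := fun s => ∑ i ∈ Finset.univ.filter (fun i => μ i = s), c i • e i with hfs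
  set gg : ℝ → V := fun v => ∑ i ∈ Finset.univ.filter (fun i => |μ i - 1| = v), c i • e i
    with hgg
  set Vs : Finset ℝ := Finset.image (fun i => |μ i - 1|) Finset.univ with hVs
  have hAfs : ∀ s, A (fs s) = s • fs s := by
    intro s
    rw [hfs]
    simp only [map_sum, map_smul]
    rw [Finset.smul_sum]
    apply Finset.sum_congr rfl
    intro i hi
    rw [hAe i, (Finset.mem_filter.mp hi).2, smul_comm]
  have hg0 : gg 0 = fs 1 := by
    rw [hgg, hfs]
    apply Finset.sum_congr _ (fun _ _ => rfl)
    ext i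
    simp [abs_eq_zero, sub_eq_zero]
  have hgv : ∀ v : ℝ, 0 < v → gg v = fs (1+v) + fs (1-v) := by
    intro v hv
    rw [hgg, hfs]
    rw [← Finset.sum_union (by
      rw [Finset.disjoint_left]
      intro i hi1 hi2
      simp only [Finset.mem_filter, Finset.mem_univ, true_and] at hi1 hi2
      rw [hi1] at hi2
      linarith)]
    apply Finset.sum_congr _ (fun _ _ => rfl)
    ext i
    simp only [Finset.mem_union, Finset.mem_filter, Finset.mem_univ, true_and]
    rw [abs_eq (le_of_lt hv)]
    constructor <;> rintro (h | h)
    · left; linarith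
    · right; linarith
    · left; linarith
    · right; linarith
  have hsumg : ∑ v ∈ Vs, gg v = f := by
    rw [hgg, hVs]
    rw [Finset.sum_fiberwise_of_maps_to
      (fun i _ => Finset.mem_image_of_mem _ (Finset.mem_univ i))]
    exact e.sum_repr' f
  have horthfs : ∀ s s' : ℝ, s ≠ s' → ⟪fs s, fs s'⟫ = 0 := by
    intro s s' hss
    have h := hAs (fs s) (fs s')
    rw [hAfs, hAfs, real_inner_smul_left, real_inner_smul_right] at h
    have h2 : (s - s') * ⟪fs s, fs s'⟫ = 0 := by linarith
    rcases mul_eq_zero.mp h2 with h' | h'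
    · exact absurd (by linarith : s = s') hss
    · exact h'
  have hBorthfs : ∀ s s' : ℝ, s + s' ≠ 2 → ⟪fs s, B (fs s')⟫ = 0 := by
    intro s s' hss
    have h : ⟪fs s, A (B (fs s')) + B (A (fs s'))⟫ = ⟪fs s, (2:ℝ) • B (fs s')⟫ := by
      rw [hAB (fs s')]
    rw [inner_add_right, ← hAs (fs s) (B (fs s')), hAfs, hAfs s', map_smul,
      real_inner_smul_left, inner_smul_right, inner_smul_right] at h
    have h2 : (s + s' - 2) * ⟪fs s, B (fs s')⟫ = 0 := by linarith
    rcases mul_eq_zero.mp h2 with h' | h'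
    · exact absurd (by linarith : s + s' = 2) hss
    · exact h'
  -- uniform decomposition of gg
  have hexp : ∀ v : ℝ, 0 ≤ v → ∃ S : Finset ℝ,
      (∀ s ∈ S, s = 1+v ∨ s = 1-v) ∧ gg v = ∑ s ∈ S, fs s := by
    intro v hv0
    rcases eq_or_lt_of_le hv0 with h | h
    · refine ⟨{1}, ?_, ?_⟩
      · intro s hs
        simp only [Finset.mem_singleton] at hs
        left; rw [hs, ← h]; ring
      · rw [Finset.sum_singleton, ← h, hg0]
    · refine ⟨{1+v, 1-v}, ?_, ?_⟩
      · intro s hs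
        simp only [Finset.mem_insert, Finset.mem_singleton] at hs
        tauto
      · rw [Finset.sum_pair (by intro hh; linarith : (1+v : ℝ) ≠ 1-v), hgv v h]
  -- cross terms vanish
  have hne : ∀ v w : ℝ, 0 ≤ v → 0 ≤ w → v ≠ w → ∀ s s' : ℝ,
      (s = 1+v ∨ s = 1-v) → (s' = 1+w ∨ s' = 1-w) → s ≠ s' ∧ s + s' ≠ 2 := by
    intro v w hv0 hw0 hvw s s' hs hs'
    constructor
    · rcases hs with rfl | rfl <;> rcases hs' with rfl | rfl <;>
        (intro h; apply hvw; linarith)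
    · rcases hs with rfl | rfl <;> rcases hs' with rfl | rfl <;>
        (intro h; apply hvw; linarith)
  have hcross : ∀ v ∈ Vs, ∀ w ∈ Vs, v ≠ w →
      ⟪gg v, A (gg w)⟫ = 0 ∧ ⟪gg v, B (gg w)⟫ = 0 ∧ ⟪A (gg v), A (gg w)⟫ = 0 := by
    intro v hv w hw hvw
    obtain ⟨i, _, hiv⟩ := Finset.mem_image.mp hv
    obtain ⟨j, _, hjw⟩ := Finset.mem_image.mp hw
    have hv0 : 0 ≤ v := hiv ▸ abs_nonneg _
    have hw0 : 0 ≤ w := hjw ▸ abs_nonneg _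
    obtain ⟨S1, hS1, hgv1⟩ := hexp v hv0
    obtain ⟨S2, hS2, hgv2⟩ := hexp w hw0
    refine ⟨?_, ?_, ?_⟩
    · rw [hgv1, hgv2, map_sum, sum_inner]
      apply Finset.sum_eq_zero
      intro s hs
      rw [inner_sum]
      apply Finset.sum_eq_zero
      intro s' hs'
      rw [hAfs, inner_smul_right,
        horthfs s s' (hne v w hv0 hw0 hvw s s' (hS1 s hs) (hS2 s' hs')).1, mul_zero]
    · rw [hgv1, hgv2, map_sum, sum_inner]
      apply Finset.sum_eq_zero
      intro s hs
      rw [inner_sum]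
      apply Finset.sum_eq_zero
      intro s' hs'
      exact hBorthfs s s' (hne v w hv0 hw0 hvw s s' (hS1 s hs) (hS2 s' hs')).2
    · rw [hgv1, hgv2, map_sum, map_sum, sum_inner]
      apply Finset.sum_eq_zero
      intro s hs
      rw [inner_sum]
      apply Finset.sum_eq_zero
      intro s' hs'
      rw [hAfs, hAfs, real_inner_smul_left, inner_smul_right,
        horthfs s s' (hne v w hv0 hw0 hvw s s' (hS1 s hs) (hS2 s' hs')).1]
      ring
  -- per-group quantities
  set Sv : ℝ → ℝ := fun v => ⟪gg v, A (gg v)⟫ with hSv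
  set Wv : ℝ → ℝ := fun v => ⟪gg v, B (gg v)⟫ with hWv
  have hABP : ∀ x, A x + B x = (2:ℝ) • P x := by
    intro x
    simp only [hA, hB, LinearMap.add_apply, LinearMap.sub_apply]
    module
  have hABQ : ∀ x, A x - B x = (2:ℝ) • Q x := by
    intro x
    simp only [hA, hB, LinearMap.add_apply, LinearMap.sub_apply]
    module
  have hSWP : ∀ v, Sv v + Wv v = 2 * ‖P (gg v)‖^2 := by
    intro v
    rw [hSv, hWv]
    simp only []
    rw [← inner_add_right, hABP, inner_smul_right, hipP]
  have hSWQ : ∀ v, Sv v - Wv v = 2 * ‖Q (gg v)‖^2 := by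
    intro v
    rw [hSv, hWv]
    simp only []
    rw [← inner_sub_right, hABQ, inner_smul_right, hipQ]
  have hsqrtSW : ∀ v, Real.sqrt ((Sv v)^2 - (Wv v)^2) = 2 * (‖P (gg v)‖ * ‖Q (gg v)‖) := by
    intro v
    have h1 : (Sv v)^2 - (Wv v)^2 = (2 * (‖P (gg v)‖ * ‖Q (gg v)‖))^2 := by
      have := hSWP v
      have := hSWQ v
      nlinarith [sq_nonneg (‖P (gg v)‖ - ‖Q (gg v)‖), sq_nonneg (‖P (gg v)‖ + ‖Q (gg v)‖)]
    rw [h1, Real.sqrt_sq (by positivity)]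
  -- key per-group inequality
  have hkey : ∀ v ∈ Vs, -(m * Real.sqrt ((Sv v)^2 - (Wv v)^2)) ≤ ‖A (gg v)‖^2 - Sv v := by
    intro v hv
    obtain ⟨i, _, hiv⟩ := Finset.mem_image.mp hv
    have hv0 : 0 ≤ v := hiv ▸ abs_nonneg _
    rcases eq_or_lt_of_le hv0 with h | hvpos
    · -- v = 0
      have hT0 : ‖A (gg v)‖^2 - Sv v = 0 := by
        rw [hSv]
        simp only []
        rw [← h, hg0, hAfs, one_smul, real_inner_self_eq_norm_sq]
        ring
      rw [hT0]
      have := Real.sqrt_nonneg ((Sv v)^2 - (Wv v)^2)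
      nlinarith
    · -- v > 0
      set p := ‖fs (1+v)‖^2 with hp
      set q := ‖fs (1-v)‖^2 with hq
      set u := ⟪fs (1+v), B (fs (1-v))⟫ with hu
      have hgexp := hgv v hvpos
      have hcfs : ⟪fs (1+v), fs (1-v)⟫ = 0 := horthfs _ _ (by intro hh; linarith)
      have hcfs' : ⟪fs (1-v), fs (1+v)⟫ = 0 := by rw [real_inner_comm]; exact hcfs
      have hSveq : Sv v = (1+v)*p + (1-v)*q := by
        rw [hSv]
        simp only []
        rw [hgexp, map_add, hAfs, hAfs]
        simp only [inner_add_left, inner_add_right, real_inner_smul_left,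
          real_inner_smul_right, inner_smul_right]
        rw [hcfs, hcfs', real_inner_self_eq_norm_sq, real_inner_self_eq_norm_sq]
        ring
      have hAAeq : ‖A (gg v)‖^2 = (1+v)^2*p + (1-v)^2*q := by
        rw [← real_inner_self_eq_norm_sq, hgexp, map_add, hAfs, hAfs]
        simp only [inner_add_left, inner_add_right, real_inner_smul_left,
          real_inner_smul_right, inner_smul_right]
        rw [hcfs, hcfs', real_inner_self_eq_norm_sq, real_inner_self_eq_norm_sq]
        ring
      have hWveq : Wv v = 2*u := by
        rw [hWv]
        simp only []
        rw [hgexp, map_add]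
        simp only [inner_add_left, inner_add_right]
        have h1 : ⟪fs (1+v), B (fs (1+v))⟫ = 0 := hBorthfs _ _ (by intro hh; linarith)
        have h2 : ⟪fs (1-v), B (fs (1-v))⟫ = 0 := hBorthfs _ _ (by intro hh; linarith)
        have h3 : ⟪fs (1-v), B (fs (1+v))⟫ = u := by
          rw [hu, ← hBs (fs (1-v)) (fs (1+v)), real_inner_comm]
        rw [h1, h2, h3, hu]
        ring
      have hueq : u^2 ≤ p * ((1-v)*(1+v)*q) := by
        have h2 : ‖B (fs (1-v))‖^2 = (1-v)*(1+v)*q := by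
          rw [hBn, hAfs, inner_smul_right, real_inner_self_eq_norm_sq, ← hq,
            norm_smul, mul_pow]
          simp only [Real.norm_eq_abs, sq_abs]
          ring
        have h1 : u^2 ≤ p * ‖B (fs (1-v))‖^2 := by
          have hcs := abs_real_inner_le_norm (fs (1+v)) (B (fs (1-v)))
          have h4 : |u| ≤ ‖fs (1+v)‖ * ‖B (fs (1-v))‖ := hcs
          have h3 := mul_self_le_mul_self (abs_nonneg u) h4
          nlinarith [h3, abs_mul_abs_self u, hp]
        rw [h2] at h1
        exact h1
      have hvm : (v ≤ m ∨ v = 1) ∧ v ≤ 1 := by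
        have := hrange i
        rw [hiv] at this
        exact ⟨this.1, this.2⟩
      rw [hSveq, hWveq, hAAeq]
      exact scalar_group m v p q u hm0 hvpos hvm.2 hvm.1 (by positivity) (by positivity) hueq
  -- global sums
  have hsplit : ∀ T : V →ₗ[ℝ] V, (∀ v ∈ Vs, ∀ w ∈ Vs, v ≠ w → ⟪gg v, T (gg w)⟫ = 0) →
      ⟪f, T f⟫ = ∑ v ∈ Vs, ⟪gg v, T (gg v)⟫ := by
    intro T hT
    conv_lhs => rw [← hsumg, map_sum, inner_sum]
    -- now : ∑ w, ⟪∑ v, gg v, T (gg w)⟫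
    apply Finset.sum_congr rfl
    intro w hw
    rw [sum_inner]
    rw [Finset.sum_eq_single w]
    · intro v hv hvw
      exact hT v hv w hw hvw
    · intro h
      exact absurd hw h
  have hAsum : ⟪f, A f⟫ = ∑ v ∈ Vs, Sv v :=
    hsplit A (fun v hv w hw hvw => (hcross v hv w hw hvw).1)
  have hBsum : ⟪f, B f⟫ = ∑ v ∈ Vs, Wv v :=
    hsplit B (fun v hv w hw hvw => (hcross v hv w hw hvw).2.1)
  have hAAsum : ‖A f‖^2 = ∑ v ∈ Vs, ‖A (gg v)‖^2 := by
    rw [← real_inner_self_eq_norm_sq]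
    conv_lhs => rw [← hsumg, map_sum, inner_sum]
    apply Finset.sum_congr rfl
    intro w hw
    rw [sum_inner, Finset.sum_eq_single w]
    · rw [real_inner_self_eq_norm_sq]
    · intro v hv hvw
      exact (hcross v hv w hw hvw).2.2
    · intro h
      exact absurd hw h
  have hPsum : ‖P f‖^2 = ∑ v ∈ Vs, ‖P (gg v)‖^2 := by
    have h1 : 2 * ‖P f‖^2 = ⟪f, A f⟫ + ⟪f, B f⟫ := by
      rw [← inner_add_right, hABP, inner_smul_right, hipP]
    have h2 : ∑ v ∈ Vs, (Sv v + Wv v) = ∑ v ∈ Vs, 2 * ‖P (gg v)‖^2 :=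
      Finset.sum_congr rfl (fun v _ => hSWP v)
    rw [Finset.sum_add_distrib, ← hAsum, ← hBsum] at h2
    rw [← Finset.mul_sum] at h2
    linarith
  have hQsum : ‖Q f‖^2 = ∑ v ∈ Vs, ‖Q (gg v)‖^2 := by
    have h1 : 2 * ‖Q f‖^2 = ⟪f, A f⟫ - ⟪f, B f⟫ := by
      rw [← inner_sub_right, hABQ, inner_smul_right, hipQ]
    have h2 : ∑ v ∈ Vs, (Sv v - Wv v) = ∑ v ∈ Vs, 2 * ‖Q (gg v)‖^2 :=
      Finset.sum_congr rfl (fun v _ => hSWQ v)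
    rw [Finset.sum_sub_distrib, ← hAsum, ← hBsum, ← Finset.mul_sum] at h2
    linarith
  -- assemble
  have h2t : 2 * ⟪P f, Q f⟫ = ‖A f‖^2 - ⟪f, A f⟫ := by
    have h1 : A f = P f + Q f := by rw [hA]; simp [LinearMap.add_apply]
    rw [← real_inner_self_eq_norm_sq, hxAx, h1]
    simp only [inner_add_left, inner_add_right]
    rw [real_inner_self_eq_norm_sq, real_inner_self_eq_norm_sq, real_inner_comm (Q f) (P f)]
    ring
  have hlow : ∑ v ∈ Vs, (‖A (gg v)‖^2 - Sv v) ≥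
      ∑ v ∈ Vs, -(m * (2 * (‖P (gg v)‖ * ‖Q (gg v)‖))) := by
    apply Finset.sum_le_sum
    intro v hv
    rw [← hsqrtSW v]
    exact hkey v hv
  have hCS : ∑ v ∈ Vs, ‖P (gg v)‖ * ‖Q (gg v)‖ ≤ ‖P f‖ * ‖Q f‖ := by
    have h1 := Real.sum_mul_le_sqrt_mul_sqrt Vs (fun v => ‖P (gg v)‖) (fun v => ‖Q (gg v)‖)
    have h2 : Real.sqrt (∑ v ∈ Vs, ‖P (gg v)‖^2) = ‖P f‖ := by
      rw [← hPsum, Real.sqrt_sq (norm_nonneg _)]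
    have h3 : Real.sqrt (∑ v ∈ Vs, ‖Q (gg v)‖^2) = ‖Q f‖ := by
      rw [← hQsum, Real.sqrt_sq (norm_nonneg _)]
    rw [h2, h3] at h1
    exact h1
  have hfinal : 2 * ⟪P f, Q f⟫ ≥ -(m * (2 * (‖P f‖ * ‖Q f‖))) := by
    rw [h2t, hAAsum, hAsum, ← Finset.sum_sub_distrib]
    calc ∑ v ∈ Vs, (‖A (gg v)‖^2 - Sv v)
        ≥ ∑ v ∈ Vs, -(m * (2 * (‖P (gg v)‖ * ‖Q (gg v)‖))) := hlow
      _ = -(m * 2 * ∑ v ∈ Vs, ‖P (gg v)‖ * ‖Q (gg v)‖) := by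
          rw [Finset.mul_sum, ← Finset.sum_neg_distrib]
          apply Finset.sum_congr rfl
          intro v hv
          ring
      _ ≥ -(m * (2 * (‖P f‖ * ‖Q f‖))) := by
          have := mul_le_mul_of_nonneg_left hCS (by linarith : (0:ℝ) ≤ m * 2)
          linarith
  linarith

/-- Here `N = n - 1` is the number of projections; the claimed bound is
`(1 - 2m cos(π/n))/(n-1)` with `n = N + 1`. -/
theorem stmt_15 {V : Type*} [NormedAddCommGroup V] [InnerProductSpace ℝ V]
    [FiniteDimensional ℝ V]
    (N : ℕ) (hN : 1 ≤ N) (E : Fin N → V →ₗ[ℝ] V)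
    (hidem : ∀ r, E r ∘ₗ E r = E r) (hsym : ∀ r, LinearMap.IsSymmetric (E r))
    (hcomm : ∀ r s : Fin N, 1 < |(r : ℤ) - (s : ℤ)| → E r ∘ₗ E s = E s ∘ₗ E r)
    (m : ℝ) (hm0 : 0 ≤ m) (hm1 : m < 1)
    (hev : ∀ r s : Fin N, (s : ℕ) = (r : ℕ) + 1 →
      ∀ μ : ℝ, μ ≠ 0 → Module.End.HasEigenvalue (E r + E s) μ → 1 - m ≤ μ)
    (K : V →ₗ[ℝ] V) (hK : K = (N : ℝ)⁻¹ • ∑ r, E r) :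
    ∀ f : V, ⟪f, K (K f)⟫ ≥ ((1 - 2 * m * Real.cos (π / (N + 1))) / N) * ⟪f, K f⟫ := by
  intro f
  classical
  set S : V →ₗ[ℝ] V := ∑ r, E r with hS
  have hidem' : ∀ r, ∀ x : V, E r (E r x) = E r x :=
    fun r x => DFunLike.congr_fun (hidem r) x
  have hSapp : ∀ x : V, S x = ∑ r, E r x := by
    intro x; rw [hS]; simp [LinearMap.sum_apply]
  have hSsym : LinearMap.IsSymmetric S := by
    intro x y
    rw [hSapp, hSapp, sum_inner, inner_sum]
    exact Finset.sum_congr rfl fun r _ => hsym r x y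
  set a : Fin N → ℝ := fun r => ‖E r f‖ with ha
  set α : ℕ → ℝ := fun j => if h : j < N then a ⟨j, h⟩ else 0 with hα
  have hαa : ∀ r : Fin N, α (r : ℕ) = a r := by
    intro r
    rw [hα]
    simp only [r.isLt, dif_pos]
  have hα0 : ∀ j, N ≤ j → α j = 0 := by
    intro j hj
    rw [hα]
    simp only [dif_neg (by omega : ¬ j < N)]
  have hip : ∀ r, ⟪f, E r f⟫ = (a r)^2 := by
    intro r
    rw [show E r f = E r (E r f) from (hidem' r f).symm, ← hsym r f (E r f),
      real_inner_self_eq_norm_sq, ha]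
  -- LHS and RHS in terms of S
  have hKf : ⟪f, K f⟫ = (N:ℝ)⁻¹ * ∑ r, (a r)^2 := by
    rw [hK]
    simp only [LinearMap.smul_apply, inner_smul_right]
    congr 1
    rw [hSapp, inner_sum]
    exact Finset.sum_congr rfl fun r _ => hip r
  have hKKf : ⟪f, K (K f)⟫ = (N:ℝ)⁻¹ * ((N:ℝ)⁻¹ * ‖S f‖^2) := by
    rw [hK]
    simp only [LinearMap.smul_apply, map_smul, inner_smul_right]
    congr 1
    congr 1
    rw [← hSsym f (S f), real_inner_self_eq_norm_sq]
  -- expand ‖S f‖²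
  have hSf2 : ‖S f‖^2 = ∑ r, ∑ s, ⟪E r f, E s f⟫ := by
    rw [← real_inner_self_eq_norm_sq, hSapp, sum_inner]
    apply Finset.sum_congr rfl
    intro r _
    rw [inner_sum]
  -- lower bound pieces
  set diag : Fin N → Fin N → ℝ := fun r s => if s = r then (a r)^2 else 0 with hdiag
  set adjA : Fin N → Fin N → ℝ :=
    fun r s => if (s:ℕ) = (r:ℕ)+1 then -(m * (a r * a s)) else 0 with hadjA
  set adjB : Fin N → Fin N → ℝ :=
    fun r s => if (r:ℕ) = (s:ℕ)+1 then -(m * (a r * a s)) else 0 with hadjB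
  have hbnd : ∀ r s : Fin N, diag r s + adjA r s + adjB r s ≤ ⟪E r f, E s f⟫ := by
    intro r s
    by_cases heq : s = r
    · subst heq
      rw [hdiag, hadjA, hadjB]
      simp only [if_pos rfl, if_neg (by omega : ¬ (s:ℕ) = (s:ℕ)+1)]
      rw [real_inner_self_eq_norm_sq]
      simp [ha]
    by_cases hadj : (s:ℕ) = (r:ℕ)+1
    · rw [hdiag, hadjA, hadjB]
      simp only [if_pos hadj, if_neg heq, if_neg (by omega : ¬ (r:ℕ) = (s:ℕ)+1)]
      have := pair_lemma (E r) (E s) (hidem r) (hsym r) (hidem s) (hsym s) m hm0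
        (hev r s hadj) f
      calc 0 + -(m * (a r * a s)) + 0 = -(m * ‖E r f‖ * ‖E s f‖) := by rw [ha]; ring
        _ ≤ ⟪E r f, E s f⟫ := this
    by_cases hadj' : (r:ℕ) = (s:ℕ)+1
    · rw [hdiag, hadjA, hadjB]
      simp only [if_pos hadj', if_neg heq, if_neg hadj]
      have := pair_lemma (E s) (E r) (hidem s) (hsym s) (hidem r) (hsym r) m hm0
        (hev s r hadj') f
      rw [real_inner_comm]
      calc 0 + 0 + -(m * (a r * a s)) = -(m * ‖E s f‖ * ‖E r f‖) := by rw [ha]; ring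
        _ ≤ ⟪E s f, E r f⟫ := this
    · -- far apart: commuting projections, nonneg
      rw [hdiag, hadjA, hadjB]
      simp only [if_neg heq, if_neg hadj, if_neg hadj']
      have habs : ∀ x y : ℤ, 1 < y - x → 1 < |x - y| := by
        intro x y h
        rw [abs_sub_comm]
        exact lt_of_lt_of_le h (le_abs_self _)
      have hfar : 1 < |(r : ℤ) - (s : ℤ)| := by
        have h1 : (r:ℕ) ≠ (s:ℕ) := fun h => heq (Fin.ext h.symm)
        rw [show ((r:ℤ)) = ((r:ℕ):ℤ) from rfl, show ((s:ℤ)) = ((s:ℕ):ℤ) from rfl]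
        rcases Nat.lt_or_ge (r:ℕ) (s:ℕ) with h | h
        · exact habs _ _ (by omega)
        · rw [abs_sub_comm]
          exact habs _ _ (by omega)
      have hcom := DFunLike.congr_fun (hcomm r s hfar)
      simp only [LinearMap.comp_apply] at hcom
      have hz : E r (E s f) = E s (E r f) := hcom f
      have e1 : ⟪E r f, E s f⟫ = ⟪f, E r (E s f)⟫ := hsym r f (E s f)
      have e2 : ⟪E r (E s f), E r (E s f)⟫ = ⟪E s f, E r (E s f)⟫ := by
        rw [hsym r (E s f) (E r (E s f)), hidem' r (E s f)]
      have e3 : ⟪E s f, E r (E s f)⟫ = ⟪f, E r (E s f)⟫ := by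
        rw [hz, hsym s f (E s (E r f)), hidem' s (E r f)]
      have e4 : (0:ℝ) ≤ ⟪E r (E s f), E r (E s f)⟫ := real_inner_self_nonneg
      linarith
  -- sum the bounds
  have hsum1 : ∑ r : Fin N, ∑ s : Fin N, diag r s = ∑ r : Fin N, (a r)^2 := by
    apply Finset.sum_congr rfl
    intro r _
    rw [hdiag]
    rw [Finset.sum_ite_eq' Finset.univ r (fun _ => (a r)^2)]
    simp
  have hadjAsum : ∀ r : Fin N, ∑ s, adjA r s = -(m * (α (r:ℕ) * α ((r:ℕ)+1))) := by
    intro r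
    by_cases h : (r:ℕ)+1 < N
    · have hval : α ((r:ℕ)+1) = a ⟨(r:ℕ)+1, h⟩ := by
        rw [hα]
        simp only [dif_pos h]
      rw [hadjA, Finset.sum_eq_single (⟨(r:ℕ)+1, h⟩ : Fin N)]
      · simp only []
        rw [if_pos trivial, hαa r, hval]
      · intro s _ hs
        simp only []
        rw [if_neg]
        intro hc
        exact hs (Fin.ext hc)
      · intro hmem
        exact absurd (Finset.mem_univ _) hmem
    · have hz : α ((r:ℕ)+1) = 0 := hα0 _ (by omega)
      rw [hz, hadjA, Finset.sum_eq_zero]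
      · ring
      · intro s _
        simp only []
        rw [if_neg]
        have := s.isLt
        omega
  have hsum2 : ∑ r : Fin N, ∑ s : Fin N, adjA r s
      = -(m * ∑ j ∈ range N, α j * α (j+1)) := by
    calc ∑ r : Fin N, ∑ s : Fin N, adjA r s
        = ∑ r : Fin N, -(m * (α (r:ℕ) * α ((r:ℕ)+1))) :=
          Finset.sum_congr rfl (fun r _ => hadjAsum r)
      _ = ∑ j ∈ range N, -(m * (α j * α (j+1))) :=
          Fin.sum_univ_eq_sum_range (fun j => -(m * (α j * α (j+1)))) N
      _ = -(m * ∑ j ∈ range N, α j * α (j+1)) := by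
          rw [Finset.mul_sum, ← Finset.sum_neg_distrib]
  have hsum3 : ∑ r : Fin N, ∑ s : Fin N, adjB r s = ∑ r : Fin N, ∑ s : Fin N, adjA r s := by
    rw [Finset.sum_comm]
    apply Finset.sum_congr rfl
    intro s _
    apply Finset.sum_congr rfl
    intro r _
    simp only [hadjA, hadjB]
    split_ifs with h
    · ring
    · rfl
  have htot : ∑ r : Fin N, ∑ s : Fin N, (diag r s + adjA r s + adjB r s)
      = (∑ r : Fin N, (a r)^2) - 2*m*(∑ j ∈ range N, α j * α (j+1)) := by
    simp only [Finset.sum_add_distrib]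
    rw [hsum1, hsum2, hsum3, hsum2]
    ring
  have hSlow : (∑ r : Fin N, (a r)^2) - 2*m*(∑ j ∈ range N, α j * α (j+1)) ≤ ‖S f‖^2 := by
    rw [hSf2, ← htot]
    apply Finset.sum_le_sum
    intro r _
    apply Finset.sum_le_sum
    intro s _
    exact hbnd r s
  have htri := tridiag N hN α hα0
  have hT' : ∑ r : Fin N, (a r)^2 = ∑ j ∈ range N, (α j)^2 := by
    rw [← Fin.sum_univ_eq_sum_range (fun j => (α j)^2) N]
    exact Finset.sum_congr rfl (fun r _ => by rw [hαa r])
  set T := ∑ j ∈ range N, (α j)^2 with hT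
  set AD := ∑ j ∈ range N, α j * α (j+1) with hAD
  set co := Real.cos (π / (N + 1)) with hco
  have hkey2 : (1 - 2*m*co) * T ≤ ‖S f‖^2 := by
    have h1 : 2*m*AD ≤ 2*m*(co*T) := by
      have h2 : AD ≤ co * T := htri
      nlinarith
    rw [hT'] at hSlow
    nlinarith
  rw [ge_iff_le, hKKf, hKf, hT']
  have hN0 : (0:ℝ) < (N:ℝ) := by exact_mod_cast hN
  rw [div_eq_mul_inv]
  calc (1 - 2*m*co) * (N:ℝ)⁻¹ * ((N:ℝ)⁻¹ * T)
      = ((N:ℝ)⁻¹ * (N:ℝ)⁻¹) * ((1-2*m*co)*T) := by ring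
    _ ≤ ((N:ℝ)⁻¹ * (N:ℝ)⁻¹) * ‖S f‖^2 := by
        apply mul_le_mul_of_nonneg_left hkey2 (by positivity)
    _ = (N:ℝ)⁻¹ * ((N:ℝ)⁻¹ * ‖S f‖^2) := by ring
end

section
/- Let P and Q be orthogonal projections on a finite-dimensional real inner product space, W = Im(P) ∩ Im(Q), and suppose ⟨Pf₂, Qf₂⟩ ≥ -p‖Pf₂‖‖Qf₂‖ holds for all f₂ ∈ W^⊥, where p ≥ 0. Then ⟨Pf, Qf⟩ ≥ -p‖Pf‖‖Qf‖ for all f. -/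
open scoped RealInnerProductSpace

theorem stmt_19 {V : Type*} [NormedAddCommGroup V] [InnerProductSpace ℝ V]
    [FiniteDimensional ℝ V]
    (P Q : V →ₗ[ℝ] V)
    (hPidem : P ∘ₗ P = P) (hPsym : LinearMap.IsSymmetric P)
    (hQidem : Q ∘ₗ Q = Q) (hQsym : LinearMap.IsSymmetric Q)
    (p : ℝ) (hp : 0 ≤ p)
    (hperp : ∀ f₂ ∈ (LinearMap.range P ⊓ LinearMap.range Q)ᗮ,
      ⟪P f₂, Q f₂⟫ ≥ -p * ‖P f₂‖ * ‖Q f₂‖) :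
    ∀ f : V, ⟪P f, Q f⟫ ≥ -p * ‖P f‖ * ‖Q f‖ := by
  intro f
  set W : Submodule ℝ V := LinearMap.range P ⊓ LinearMap.range Q with hW
  set f₁ : V := (W.orthogonalProjection f : V) with hf₁
  set f₂ : V := f - f₁ with hf₂
  have hf₁W : f₁ ∈ W := (W.orthogonalProjection f).2
  have hf₂W : f₂ ∈ Wᗮ := W.sub_starProjection_mem_orthogonal f
  have hPf₁ : P f₁ = f₁ := by
    obtain ⟨x, hx⟩ := hf₁W.1
    rw [← hx, ← LinearMap.comp_apply, hPidem]
  have hQf₁ : Q f₁ = f₁ := by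
    obtain ⟨x, hx⟩ := hf₁W.2
    rw [← hx, ← LinearMap.comp_apply, hQidem]
  have hsplit : f = f₁ + f₂ := by simp [hf₂]
  have hPf : P f = f₁ + P f₂ := by rw [hsplit, map_add, hPf₁]
  have hQf : Q f = f₁ + Q f₂ := by rw [hsplit, map_add, hQf₁]
  have h21 : ⟪f₂, f₁⟫ = 0 := by rw [real_inner_comm]; exact hf₂W f₁ hf₁W
  have hPperp : ⟪f₁, P f₂⟫ = 0 := by
    rw [real_inner_comm, hPsym f₂ f₁, hPf₁]; exact h21
  have hQperp : ⟪f₁, Q f₂⟫ = 0 := by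
    rw [real_inner_comm, hQsym f₂ f₁, hQf₁]; exact h21
  have hinner : ⟪P f, Q f⟫ = ‖f₁‖ ^ 2 + ⟪P f₂, Q f₂⟫ := by
    rw [hPf, hQf, inner_add_left, inner_add_right, inner_add_right, hQperp,
      real_inner_comm f₁ (P f₂), hPperp, real_inner_self_eq_norm_sq]
    ring
  have hPn : ‖P f‖ ^ 2 = ‖f₁‖ ^ 2 + ‖P f₂‖ ^ 2 := by
    rw [hPf, norm_add_sq_real, hPperp]; ring
  have hQn : ‖Q f‖ ^ 2 = ‖f₁‖ ^ 2 + ‖Q f₂‖ ^ 2 := by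
    rw [hQf, norm_add_sq_real, hQperp]; ring
  have ht : ⟪P f₂, Q f₂⟫ ≥ -p * ‖P f₂‖ * ‖Q f₂‖ := hperp f₂ hf₂W
  have hX : (0:ℝ) ≤ ‖P f‖ := norm_nonneg _
  have hY : (0:ℝ) ≤ ‖Q f‖ := norm_nonneg _
  have ha : (0:ℝ) ≤ ‖P f₂‖ := norm_nonneg _
  have hb : (0:ℝ) ≤ ‖Q f₂‖ := norm_nonneg _
  have hkey : ‖P f‖ * ‖Q f‖ ≥ ‖f₁‖ ^ 2 + ‖P f₂‖ * ‖Q f₂‖ := by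
    nlinarith [sq_nonneg (‖P f₂‖ - ‖Q f₂‖), sq_nonneg (‖f₁‖),
      mul_nonneg hX hY, sq_nonneg (‖P f‖ * ‖Q f‖ + ‖f₁‖ ^ 2 + ‖P f₂‖ * ‖Q f₂‖),
      mul_nonneg ha hb]
  nlinarith [mul_le_mul_of_nonneg_left hkey hp, sq_nonneg (‖f₁‖)]
end
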